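/- arXiv:1808.10379 — 5 statements merged into one kernel-verified Lean document; each statement's English description precedes it below -/
import Mathlib

section
/- Let W be nonnegative row-stochastic irreducible with left Perron eigenvector αᵀ (αᵀW = αᵀ, αᵀ𝟙 = 1, α entrywise nonnegative) and let Σ be diagonal with entries in (0,1). Then the static gain matrix H = (I − (I−Σ)W)⁻¹Σ has 1 as an eigenvalue, with right eigenvector 𝟙 (the all-ones vector) and left eigenvector αᵀΣ(I−Σ)⁻¹ / (αᵀΣ(I−Σ)⁻¹𝟙). -/
open Matrix

def MatIrreducible {n : ℕ} (W : Matrix (Fin n) (Fin n) ℝ) : Prop :=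
  ∀ i j, ∃ k : ℕ, 0 < (W ^ k) i j

theorem stmt3 {n : ℕ} (hn : 0 < n) (W : Matrix (Fin n) (Fin n) ℝ)
    (σ : Fin n → ℝ) (α : Fin n → ℝ)
    (hWnn : ∀ i j, 0 ≤ W i j) (hWrs : ∀ i, ∑ j, W i j = 1)
    (hWirr : MatIrreducible W)
    (hα : α ᵥ* W = α) (hαnn : ∀ i, 0 ≤ α i) (hαsum : ∑ i, α i = 1)
    (hσ : ∀ i, 0 < σ i ∧ σ i < 1) :
    -- H = (I − (I−Σ)W)⁻¹ Σ
    (((1 - (1 - Matrix.diagonal σ) * W)⁻¹ * Matrix.diagonal σ) *ᵥ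
        (fun _ => (1 : ℝ)) = fun _ => (1 : ℝ)) ∧
    ((fun i => (α i * σ i / (1 - σ i)) / (∑ j, α j * σ j / (1 - σ j))) ᵥ*
        ((1 - (1 - Matrix.diagonal σ) * W)⁻¹ * Matrix.diagonal σ) =
      fun i => (α i * σ i / (1 - σ i)) / (∑ j, α j * σ j / (1 - σ j))) := by
  set M : Matrix (Fin n) (Fin n) ℝ :=
    1 - (1 - Matrix.diagonal σ) * W with hMdef
  have h1D : (1 : Matrix (Fin n) (Fin n) ℝ) - Matrix.diagonal σ =
      Matrix.diagonal (fun i => 1 - σ i) := by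
    rw [← Matrix.diagonal_one, Matrix.diagonal_sub]
  -- entrywise formula for M *ᵥ v
  have hMv : ∀ v : Fin n → ℝ, ∀ i,
      (M *ᵥ v) i = v i - (1 - σ i) * ∑ j, W i j * v j := by
    intro v i
    rw [hMdef, Matrix.sub_mulVec, Matrix.one_mulVec, h1D]
    simp only [Matrix.mulVec, Matrix.mul_apply, Matrix.diagonal_apply, dotProduct,
      Pi.sub_apply, Finset.mul_sum]
    congr 1
    apply Finset.sum_congr rfl
    intro j _
    rw [Finset.sum_eq_single i (fun k _ hk => by simp [Ne.symm hk]) (by simp)]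
    simp only [if_true, eq_self_iff_true]
    ring
  -- M is invertible
  have hdet : IsUnit M.det := by
    rw [isUnit_iff_ne_zero]
    intro hd
    obtain ⟨v, hv0, hv⟩ := Matrix.exists_mulVec_eq_zero_iff.mpr hd
    obtain ⟨i0, -, hi0⟩ := Finset.exists_max_image Finset.univ (fun i => |v i|)
      ⟨⟨0, hn⟩, Finset.mem_univ _⟩
    have hvi0 : 0 < |v i0| := by
      obtain ⟨j, hj⟩ := Function.ne_iff.mp hv0
      exact lt_of_lt_of_le (abs_pos.mpr hj) (hi0 j (Finset.mem_univ _))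
    have heq : v i0 = (1 - σ i0) * ∑ j, W i0 j * v j := by
      have := congrFun hv i0
      rw [hMv v i0] at this
      have : v i0 - (1 - σ i0) * ∑ j, W i0 j * v j = 0 := this
      linarith
    have hsb : |∑ j, W i0 j * v j| ≤ |v i0| := by
      calc |∑ j, W i0 j * v j| ≤ ∑ j, |W i0 j * v j| := Finset.abs_sum_le_sum_abs _ _
        _ ≤ ∑ j, W i0 j * |v i0| := by
            apply Finset.sum_le_sum
            intro j _
            rw [abs_mul, abs_of_nonneg (hWnn i0 j)]
            exact mul_le_mul_of_nonneg_left (hi0 j (Finset.mem_univ _)) (hWnn i0 j)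
        _ = |v i0| := by rw [← Finset.sum_mul, hWrs, one_mul]
    have h1 : |v i0| ≤ (1 - σ i0) * |v i0| := by
      calc |v i0| = |1 - σ i0| * |∑ j, W i0 j * v j| := by rw [← abs_mul, ← heq]
        _ = (1 - σ i0) * |∑ j, W i0 j * v j| := by
            rw [abs_of_nonneg (by linarith [(hσ i0).2])]
        _ ≤ (1 - σ i0) * |v i0| :=
            mul_le_mul_of_nonneg_left hsb (by linarith [(hσ i0).2])
    nlinarith [(hσ i0).1]
  -- positivity of S
  have hσ1 : ∀ i, (0:ℝ) < 1 - σ i := fun i => by linarith [(hσ i).2]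
  set S : ℝ := ∑ j, α j * σ j / (1 - σ j) with hS
  have hSpos : 0 < S := by
    obtain ⟨j, hj⟩ : ∃ j, 0 < α j := by
      by_contra h
      push_neg at h
      have : ∑ i, α i = 0 := Finset.sum_eq_zero fun i _ => le_antisymm (h i) (hαnn i)
      rw [hαsum] at this; norm_num at this
    refine Finset.sum_pos' (fun i _ => div_nonneg (mul_nonneg (hαnn i) (hσ i).1.le) (hσ1 i).le)
      ⟨j, Finset.mem_univ j, div_pos (mul_pos hj (hσ j).1) (hσ1 j)⟩
  constructor
  · -- right eigenvector: M *ᵥ 𝟙 = σ, so M⁻¹ *ᵥ σ = 𝟙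
    have hM1 : M *ᵥ (fun _ => (1:ℝ)) = σ := by
      funext i
      rw [hMv]
      simp [hWrs i]
    have hD1 : Matrix.diagonal σ *ᵥ (fun _ => (1:ℝ)) = σ := by
      funext i
      simp [Matrix.mulVec, Matrix.diagonal_apply, dotProduct, Finset.sum_ite_eq]
    calc (M⁻¹ * Matrix.diagonal σ) *ᵥ (fun _ => (1:ℝ))
        = M⁻¹ *ᵥ (Matrix.diagonal σ *ᵥ (fun _ => (1:ℝ))) := (Matrix.mulVec_mulVec _ _ _).symm
      _ = M⁻¹ *ᵥ (M *ᵥ (fun _ => (1:ℝ))) := by rw [hD1, hM1]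
      _ = (M⁻¹ * M) *ᵥ (fun _ => (1:ℝ)) := Matrix.mulVec_mulVec _ _ _
      _ = fun _ => (1:ℝ) := by rw [Matrix.nonsing_inv_mul M hdet, Matrix.one_mulVec]
  · -- left eigenvector
    set β : Fin n → ℝ := fun i => (α i * σ i / (1 - σ i)) / S with hβ
    set γ : Fin n → ℝ := fun i => (α i / (1 - σ i)) / S with hγ
    have hγM : γ ᵥ* M = β := by
      rw [hMdef, Matrix.vecMul_sub, Matrix.vecMul_one, h1D, ← Matrix.vecMul_vecMul]
      have hγd : γ ᵥ* Matrix.diagonal (fun i => 1 - σ i) = S⁻¹ • α := by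
        funext i
        rw [Matrix.vecMul_diagonal]
        simp only [hγ, Pi.smul_apply, smul_eq_mul]
        have h1 : (1 - σ i) ≠ 0 := ne_of_gt (hσ1 i)
        have h2 : S ≠ 0 := ne_of_gt hSpos
        field_simp
      rw [hγd]
      have : (S⁻¹ • α) ᵥ* W = S⁻¹ • α := by
        rw [Matrix.smul_vecMul, hα]
      rw [this]
      funext i
      simp only [hβ, hγ, Pi.sub_apply, Pi.smul_apply, smul_eq_mul]
      have h1 : (1 - σ i) ≠ 0 := ne_of_gt (hσ1 i)
      have h2 : S ≠ 0 := ne_of_gt hSpos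
      field_simp
      ring
    have hβinv : β ᵥ* M⁻¹ = γ := by
      calc β ᵥ* M⁻¹ = (γ ᵥ* M) ᵥ* M⁻¹ := by rw [hγM]
        _ = γ ᵥ* (M * M⁻¹) := Matrix.vecMul_vecMul _ _ _
        _ = γ := by rw [Matrix.mul_nonsing_inv M hdet, Matrix.vecMul_one]
    calc β ᵥ* (M⁻¹ * Matrix.diagonal σ)
        = (β ᵥ* M⁻¹) ᵥ* Matrix.diagonal σ := (Matrix.vecMul_vecMul _ _ _).symm
      _ = γ ᵥ* Matrix.diagonal σ := by rw [hβinv]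
      _ = β := by
          funext i
          rw [Matrix.vecMul_diagonal]
          simp only [hγ, hβ]
          have h1 : (1 - σ i) ≠ 0 := ne_of_gt (hσ1 i)
          have h2 : S ≠ 0 := ne_of_gt hSpos
          field_simp
end

section
/- Let A ∈ ℝ^{n×n} have all row vectors of Euclidean norm at most β > 0. Then the minimum singular value of A satisfies σ_min(A) ≥ ((n−1)/(n β²))^{(n−1)/2} · |det(A)|. -/
open Matrix

/-- Euclidean norm of a vector. -/
noncomputable def eucNorm {n : ℕ} (v : Fin n → ℝ) : ℝ :=
  Real.sqrt (∑ i, (v i) ^ 2)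

/-- Minimum singular value of a matrix: the infimum of ‖A x‖ over unit vectors x. -/
noncomputable def sMin {n : ℕ} (A : Matrix (Fin n) (Fin n) ℝ) : ℝ :=
  sInf {r : ℝ | ∃ x : Fin n → ℝ, eucNorm x = 1 ∧ r = eucNorm (A *ᵥ x)}

/-!
Complete a unit vector `x` to an orthonormal basis `b` with `b i₀ = x`. Hadamard's inequality gives
`|det A| ≤ ‖A x‖ · ∏_{j ≠ i₀} ‖A b j‖`, and by AM-GM the remaining `n - 1` factors have product at
most `(S / (n - 1)) ^ ((n - 1) / 2)`, where `S = ∑ j, ‖A b j‖ ^ 2` is the squared Frobenius norm of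
`A`, i.e. the sum of the squared row norms, at most `n β ^ 2`.
-/

open Finset Module RealInnerProductSpace

section InnerProductSpace

variable {E : Type*} [NormedAddCommGroup E] [InnerProductSpace ℝ E]

theorem OrthonormalBasis.abs_det_le_prod_norm {n : ℕ} (b : OrthonormalBasis (Fin n) ℝ E)
    (v : Fin n → E) : |b.toBasis.det v| ≤ ∏ i, ‖v i‖ := by
  have : Fact (finrank ℝ E = n) := ⟨by simpa using finrank_eq_card_basis b.toBasis⟩
  rw [← b.toBasis.orientation.volumeForm_robust' b]
  exact b.toBasis.orientation.abs_volumeForm_apply_le v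

theorem LinearMap.abs_det_le_prod_norm_apply {n : ℕ} (f : E →ₗ[ℝ] E)
    (b : OrthonormalBasis (Fin n) ℝ E) : |LinearMap.det f| ≤ ∏ i, ‖f (b i)‖ := by
  have hdet : b.toBasis.det (f ∘ b) = LinearMap.det f := by
    rw [b.toBasis.det_comp, ← OrthonormalBasis.coe_toBasis, Basis.det_self, mul_one]
  simpa only [hdet, Function.comp_apply] using b.abs_det_le_prod_norm (f ∘ b)

theorem exists_orthonormalBasis_apply_eq [FiniteDimensional ℝ E] {ι : Type*} [Fintype ι]
    (hι : finrank ℝ E = Fintype.card ι) (i₀ : ι) {x : E} (hx : ‖x‖ = 1) :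
    ∃ b : OrthonormalBasis ι ℝ E, b i₀ = x := by
  have hv : Orthonormal ℝ (({i₀} : Set ι).domRestrict fun _ => x) :=
    ⟨fun _ => hx, fun i j hij => absurd (Subsingleton.elim i j) hij⟩
  obtain ⟨b, hb⟩ := hv.exists_orthonormalBasis_extension_of_card_eq hι
  exact ⟨b, hb i₀ rfl⟩

end InnerProductSpace

theorem Finset.prod_le_rpow_mean_sq {ι : Type*} (s : Finset ι) {g : ι → ℝ}
    (hg : ∀ i ∈ s, 0 ≤ g i) :
    ∏ i ∈ s, g i ≤ ((∑ i ∈ s, g i ^ 2) / #s) ^ ((#s : ℝ) / 2) := by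
  rcases s.eq_empty_or_nonempty with rfl | hs
  · simp
  have hcard : (0 : ℝ) < #s := by exact_mod_cast hs.card_pos
  have hP : 0 ≤ ∏ i ∈ s, g i := prod_nonneg hg
  have amgm := Real.geom_mean_le_arith_mean s (fun _ => 1) (fun i => g i ^ 2)
    (fun _ _ => zero_le_one) (by simpa using hcard) (fun i _ => sq_nonneg (g i))
  simp only [Real.rpow_one, sum_const, nsmul_eq_mul, mul_one, one_mul, prod_pow] at amgm
  calc ∏ i ∈ s, g i = (((∏ i ∈ s, g i) ^ 2) ^ (#s : ℝ)⁻¹) ^ ((#s : ℝ) / 2) := by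
        rw [← Real.rpow_natCast, ← Real.rpow_mul hP, ← Real.rpow_mul hP]
        rw [show ((2 : ℕ) : ℝ) * (#s : ℝ)⁻¹ * (#s / 2) = 1 by field_simp; norm_num, Real.rpow_one]
    _ ≤ ((∑ i ∈ s, g i ^ 2) / #s) ^ ((#s : ℝ) / 2) := by gcongr

theorem LinearMap.abs_det_le_norm_apply_mul_rpow {E : Type*} [NormedAddCommGroup E]
    [InnerProductSpace ℝ E] [FiniteDimensional ℝ E] {n : ℕ} (hn : 0 < n)
    (hE : finrank ℝ E = n) (f : E →ₗ[ℝ] E) {S : ℝ}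
    (hS : ∀ b : OrthonormalBasis (Fin n) ℝ E, ∑ j, ‖f (b j)‖ ^ 2 ≤ S) {x : E} (hx : ‖x‖ = 1) :
    |LinearMap.det f| ≤ ‖f x‖ * (S / ((n : ℝ) - 1)) ^ (((n : ℝ) - 1) / 2) := by
  let i₀ : Fin n := ⟨0, hn⟩
  obtain ⟨b, hb⟩ := exists_orthonormalBasis_apply_eq (by simpa using hE) i₀ hx
  have hcard : ((univ.erase i₀).card : ℝ) = n - 1 := by
    rw [card_erase_of_mem (mem_univ _), card_univ, Fintype.card_fin, Nat.cast_pred hn]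
  have hn1 : (0 : ℝ) ≤ n - 1 := sub_nonneg.mpr (Nat.one_le_cast.mpr hn)
  have hrest : ∏ j ∈ univ.erase i₀, ‖f (b j)‖ ≤ (S / ((n : ℝ) - 1)) ^ (((n : ℝ) - 1) / 2) := by
    refine ((univ.erase i₀).prod_le_rpow_mean_sq fun j _ => norm_nonneg _).trans ?_
    rw [hcard]
    have hsum : ∑ j ∈ univ.erase i₀, ‖f (b j)‖ ^ 2 ≤ S :=
      (sum_le_sum_of_subset_of_nonneg (subset_univ _) fun j _ _ => sq_nonneg _).trans (hS b)
    gcongr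
  calc |LinearMap.det f| ≤ ∏ j, ‖f (b j)‖ := f.abs_det_le_prod_norm_apply b
    _ = ‖f x‖ * ∏ j ∈ univ.erase i₀, ‖f (b j)‖ := by
      rw [← hb]
      exact (mul_prod_erase univ (fun j => ‖f (b j)‖) (mem_univ i₀)).symm
    _ ≤ ‖f x‖ * (S / ((n : ℝ) - 1)) ^ (((n : ℝ) - 1) / 2) := by gcongr

theorem eucNorm_eq_norm {n : ℕ} (v : Fin n → ℝ) : eucNorm v = ‖WithLp.toLp 2 v‖ := by
  simp [eucNorm, EuclideanSpace.norm_eq]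

theorem Matrix.sum_sq_norm_toEuclideanLin_apply {m n ι : Type*} [Fintype m] [Fintype n]
    [DecidableEq n] [Fintype ι] (A : Matrix m n ℝ)
    (b : OrthonormalBasis ι ℝ (EuclideanSpace ℝ n)) :
    ∑ j, ‖toEuclideanLin A (b j)‖ ^ 2 = ∑ i, ‖WithLp.toLp 2 (A i)‖ ^ 2 := by
  have hrow : ∀ v, ‖toEuclideanLin A v‖ ^ 2 = ∑ i, ⟪v, WithLp.toLp 2 (A i)⟫ ^ 2 := by
    intro v
    rw [EuclideanSpace.norm_sq_eq]
    simp [toLpLin_apply, mulVec, dotProduct, PiLp.inner_apply]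
  simp only [hrow]
  rw [sum_comm]
  simp only [b.sum_sq_inner_right]

theorem Matrix.sum_sq_norm_toEuclideanLin_apply_le {m n ι : Type*} [Fintype m] [Fintype n]
    [DecidableEq n] [Fintype ι] (A : Matrix m n ℝ)
    (b : OrthonormalBasis ι ℝ (EuclideanSpace ℝ n)) {β : ℝ} (hA : ∀ i, ‖WithLp.toLp 2 (A i)‖ ≤ β) :
    ∑ j, ‖toEuclideanLin A (b j)‖ ^ 2 ≤ Fintype.card m * β ^ 2 := by
  rw [A.sum_sq_norm_toEuclideanLin_apply b]
  calc ∑ i, ‖WithLp.toLp 2 (A i)‖ ^ 2 ≤ ∑ _i : m, β ^ 2 := by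
        gcongr with i
        exact hA i
    _ = Fintype.card m * β ^ 2 := by simp

theorem le_sMin {n : ℕ} (hn : 0 < n) (A : Matrix (Fin n) (Fin n) ℝ) {c : ℝ}
    (h : ∀ x, eucNorm x = 1 → c ≤ eucNorm (A *ᵥ x)) : c ≤ sMin A := by
  refine le_csInf ⟨_, Pi.single ⟨0, hn⟩ 1, ?_, rfl⟩ ?_
  · simp [eucNorm_eq_norm]
  · rintro _ ⟨x, hx, rfl⟩
    exact h x hx

theorem stmt5 {n : ℕ} (hn : 0 < n) (A : Matrix (Fin n) (Fin n) ℝ) (β : ℝ)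
    (hβ : 0 < β) (hrows : ∀ i, eucNorm (fun j => A i j) ≤ β) :
    sMin A ≥ (((n : ℝ) - 1) / (n * β ^ 2)) ^ (((n : ℝ) - 1) / 2) * |A.det| := by
  set K := ((n * β ^ 2) / ((n : ℝ) - 1)) ^ (((n : ℝ) - 1) / 2)
  have hbase : 0 ≤ (n * β ^ 2) / ((n : ℝ) - 1) :=
    div_nonneg (by positivity) (sub_nonneg.mpr (Nat.one_le_cast.mpr hn))
  -- for `n = 1` the base is the junk value `β ^ 2 / 0 = 0`, but then the exponent is `0`
  have hK : 0 < K := by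
    refine (Real.rpow_nonneg hbase _).lt_of_ne' ?_
    rw [Ne, Real.rpow_eq_zero_iff_of_nonneg hbase, div_eq_zero_iff]
    rintro ⟨h | h, he⟩
    · exact (by positivity : (n : ℝ) * β ^ 2 ≠ 0) h
    · simp [h] at he
  have hS (b : OrthonormalBasis (Fin n) ℝ (EuclideanSpace ℝ (Fin n))) :
      ∑ j, ‖toEuclideanLin A (b j)‖ ^ 2 ≤ n * β ^ 2 := by
    simpa using A.sum_sq_norm_toEuclideanLin_apply_le b fun i =>
      (eucNorm_eq_norm _).symm.trans_le (hrows i)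
  rw [ge_iff_le, ← inv_div, Real.inv_rpow hbase]
  refine le_sMin hn A fun x hx => (inv_mul_le_iff₀ hK).mpr ?_
  have h := (toEuclideanLin A).abs_det_le_norm_apply_mul_rpow hn (by simp) hS
    (x := WithLp.toLp 2 x) (by rwa [← eucNorm_eq_norm])
  rwa [LinearMap.det_toLpLin, toLpLin_apply, ← eucNorm_eq_norm, mul_comm] at h
end

section
/- Let W be nonnegative row-stochastic irreducible, T = diag(p₁,...,pₙ) with 0 < pᵢ ≤ 1, and for small σ > 0 define H(σ) = σ(I − (I−σT)W)⁻¹T. Then ‖H(σ)‖ is bounded as σ → 0⁺: there exist constants M > 0 and σ̄ > 0 such that ‖H(σ)‖ ≤ M for all σ ∈ (0, σ̄]. -/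
open Matrix

noncomputable def enorm {n : ℕ} (v : Fin n → ℝ) : ℝ :=
  Real.sqrt (∑ i, (v i) ^ 2)

/-- Operator (spectral) norm induced by the Euclidean vector norm. -/
noncomputable def opNorm {n : ℕ} (A : Matrix (Fin n) (Fin n) ℝ) : ℝ :=
  sSup {r : ℝ | ∃ x : Fin n → ℝ, _root_.enorm x = 1 ∧ r = _root_.enorm (A *ᵥ x)}

/-!
Write `T = diagonal p` and `δ = minᵢ pᵢ`. For `σ ∈ (0, 1]` the matrix `(1 - σT)W` is nonnegative
with row sums at most `1 - σδ`, so `1 - (1 - σT)W` expands sup norms by the factor `σδ`. Its inverse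
therefore has sup operator norm at most `1 / (σδ)`, the factor `σ` in `H(σ)` cancels, and
`‖H(σ)‖∞ ≤ 1 / δ`; the Euclidean operator norm is at most `√n` times that.
-/

lemma exists_pos_le_of_forall_pos {ι : Type*} [Finite ι] {f : ι → ℝ} (hf : ∀ i, 0 < f i) :
    ∃ δ > 0, ∀ i, δ ≤ f i := by
  rcases isEmpty_or_nonempty ι with hι | hι
  · exact ⟨1, one_pos, isEmptyElim⟩
  · obtain ⟨i₀, hi₀⟩ := Finite.exists_min f
    exact ⟨f i₀, hf i₀, hi₀⟩

namespace Matrix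

variable {ι : Type*} [Fintype ι]

lemma abs_mulVec_le_of_nonneg {A : Matrix ι ι ℝ} {i : ι} (hA : ∀ j, 0 ≤ A i j) (x : ι → ℝ) :
    |(A *ᵥ x) i| ≤ (∑ j, A i j) * ‖x‖ := by
  calc |(A *ᵥ x) i| = |∑ j, A i j * x j| := rfl
    _ ≤ ∑ j, |A i j * x j| := Finset.abs_sum_le_sum_abs _ _
    _ ≤ ∑ j, A i j * ‖x‖ := by
      gcongr with j
      rw [abs_mul, abs_of_nonneg (hA j), ← Real.norm_eq_abs]
      exact mul_le_mul_of_nonneg_left (norm_le_pi_norm x j) (hA j)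
    _ = (∑ j, A i j) * ‖x‖ := Finset.sum_mul _ _ _ |>.symm

variable [DecidableEq ι]

lemma mul_norm_le_norm_one_sub_mulVec {A : Matrix ι ι ℝ} {δ : ℝ} (hA : ∀ i j, 0 ≤ A i j)
    (hrow : ∀ i, ∑ j, A i j ≤ 1 - δ) (x : ι → ℝ) : δ * ‖x‖ ≤ ‖(1 - A) *ᵥ x‖ := by
  rw [sub_mulVec, one_mulVec]
  have hcoord : ∀ i, |x i| ≤ ‖x - A *ᵥ x‖ + (1 - δ) * ‖x‖ := fun i =>
    calc |x i| ≤ |(x - A *ᵥ x) i| + |(A *ᵥ x) i| := by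
          simpa using abs_add_le ((x - A *ᵥ x) i) ((A *ᵥ x) i)
      _ ≤ ‖x - A *ᵥ x‖ + (1 - δ) * ‖x‖ := by
          gcongr
          · exact norm_le_pi_norm (x - A *ᵥ x) i
          · exact (abs_mulVec_le_of_nonneg (hA i) x).trans
              (mul_le_mul_of_nonneg_right (hrow i) (norm_nonneg x))
  rcases isEmpty_or_nonempty ι with hι | hι
  · simp [Subsingleton.elim x 0]
  · have := (pi_norm_le_iff_of_nonempty x).2 hcoord
    linarith

lemma isUnit_one_sub_of_row_sum_le {A : Matrix ι ι ℝ} {δ : ℝ} (hδ : 0 < δ)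
    (hA : ∀ i j, 0 ≤ A i j) (hrow : ∀ i, ∑ j, A i j ≤ 1 - δ) : IsUnit (1 - A) := by
  refine mulVec_injective_iff_isUnit.1 fun u v huv => ?_
  have := mul_norm_le_norm_one_sub_mulVec hA hrow (u - v)
  rw [mulVec_sub, huv, sub_self, norm_zero] at this
  exact sub_eq_zero.1 (norm_le_zero_iff.1 (nonpos_of_mul_nonpos_right this hδ))

lemma mul_norm_inv_one_sub_mulVec_le {A : Matrix ι ι ℝ} {δ : ℝ} (hδ : 0 < δ)
    (hA : ∀ i j, 0 ≤ A i j) (hrow : ∀ i, ∑ j, A i j ≤ 1 - δ) (y : ι → ℝ) :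
    δ * ‖(1 - A)⁻¹ *ᵥ y‖ ≤ ‖y‖ := by
  have hdet := (isUnit_iff_isUnit_det _).1 (isUnit_one_sub_of_row_sum_le hδ hA hrow)
  have := mul_norm_le_norm_one_sub_mulVec hA hrow ((1 - A)⁻¹ *ᵥ y)
  rwa [mulVec_mulVec, mul_nonsing_inv _ hdet, one_mulVec] at this

end Matrix

section Resolvent

variable {ι : Type*} [Fintype ι] [DecidableEq ι]

lemma one_sub_smul_diagonal_mul_apply (σ : ℝ) (p : ι → ℝ) (W : Matrix ι ι ℝ) (i j : ι) :
    ((1 - σ • diagonal p) * W) i j = (1 - σ * p i) * W i j := by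
  simp only [sub_mul, one_mul, Algebra.smul_mul_assoc, Matrix.sub_apply, Matrix.smul_apply,
    diagonal_mul, smul_eq_mul, sub_right_inj]
  ring

lemma norm_diagonal_mulVec_le {p : ι → ℝ} (hp : ∀ i, |p i| ≤ 1) (x : ι → ℝ) :
    ‖diagonal p *ᵥ x‖ ≤ ‖x‖ :=
  (pi_norm_le_iff_of_nonneg (norm_nonneg x)).2 fun i => by
    rw [mulVec_diagonal, norm_mul]
    exact mul_le_of_le_one_left (norm_nonneg _) (hp i) |>.trans (norm_le_pi_norm x i)

lemma mul_norm_resolvent_mulVec_le {W : Matrix ι ι ℝ} {p : ι → ℝ} {σ δ : ℝ}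
    (hW : ∀ i j, 0 ≤ W i j) (hWrs : ∀ i, ∑ j, W i j ≤ 1) (hσ : 0 < σ) (hσ1 : σ ≤ 1)
    (hδ : 0 < δ) (hp : ∀ i, δ ≤ p i ∧ p i ≤ 1) (x : ι → ℝ) :
    δ * ‖(σ • (1 - (1 - σ • diagonal p) * W)⁻¹ * diagonal p) *ᵥ x‖ ≤ ‖x‖ := by
  have hσp : ∀ i, 0 ≤ 1 - σ * p i := fun i => by nlinarith [hp i]
  have hA : ∀ i j, 0 ≤ ((1 - σ • diagonal p) * W) i j := fun i j => by
    rw [one_sub_smul_diagonal_mul_apply]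
    exact mul_nonneg (hσp i) (hW i j)
  have hrow : ∀ i, ∑ j, ((1 - σ • diagonal p) * W) i j ≤ 1 - σ * δ := fun i => by
    simp_rw [one_sub_smul_diagonal_mul_apply, ← Finset.mul_sum]
    nlinarith [mul_le_of_le_one_right (hσp i) (hWrs i), hp i]
  have hinv := mul_norm_inv_one_sub_mulVec_le (mul_pos hσ hδ) hA hrow (diagonal p *ᵥ x)
  have hdiag := norm_diagonal_mulVec_le (fun i => abs_le.2 ⟨by linarith [hp i], (hp i).2⟩) x
  rw [← mulVec_mulVec, smul_mulVec, norm_smul, Real.norm_of_nonneg hσ.le]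
  linarith

end Resolvent

lemma pi_norm_le_enorm {n : ℕ} (x : Fin n → ℝ) : ‖x‖ ≤ _root_.enorm x :=
  (pi_norm_le_iff_of_nonneg (Real.sqrt_nonneg _)).2 fun i =>
    Real.abs_le_sqrt (Finset.single_le_sum (fun j _ => sq_nonneg (x j)) (Finset.mem_univ i))

lemma enorm_le_sqrt_mul_pi_norm {n : ℕ} (x : Fin n → ℝ) :
    _root_.enorm x ≤ Real.sqrt n * ‖x‖ := by
  rw [← Real.sqrt_sq (norm_nonneg x), ← Real.sqrt_mul (Nat.cast_nonneg n)]
  refine Real.sqrt_le_sqrt ?_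
  calc ∑ i, x i ^ 2 ≤ ∑ _i : Fin n, ‖x‖ ^ 2 :=
        Finset.sum_le_sum fun i _ => sq_le_sq' (abs_le.1 (norm_le_pi_norm x i)).1
          (abs_le.1 (norm_le_pi_norm x i)).2
    _ = n * ‖x‖ ^ 2 := by simp

lemma opNorm_le_of_enorm_mulVec_le {n : ℕ} {A : Matrix (Fin n) (Fin n) ℝ} {K : ℝ} (hK : 0 ≤ K)
    (h : ∀ x, _root_.enorm (A *ᵥ x) ≤ K * _root_.enorm x) : opNorm A ≤ K := by
  refine Real.sSup_le ?_ hK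
  rintro r ⟨x, hx, rfl⟩
  simpa [hx] using h x

theorem stmt9_general {n : ℕ} (W : Matrix (Fin n) (Fin n) ℝ) (p : Fin n → ℝ)
    (hWnn : ∀ i j, 0 ≤ W i j) (hWrs : ∀ i, ∑ j, W i j = 1)
    (hp : ∀ i, 0 < p i ∧ p i ≤ 1) :
    ∃ M > (0 : ℝ), ∃ σbar > (0 : ℝ), ∀ σ : ℝ, 0 < σ → σ ≤ σbar →
      opNorm (σ • (1 - (1 - σ • Matrix.diagonal p) * W)⁻¹ * Matrix.diagonal p)
        ≤ M := by
  obtain ⟨δ, hδ, hδp⟩ := exists_pos_le_of_forall_pos fun i => (hp i).1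
  refine ⟨Real.sqrt n / δ + 1, by positivity, 1, one_pos, fun σ hσ hσ1 => ?_⟩
  refine (opNorm_le_of_enorm_mulVec_le (by positivity) fun x => ?_).trans
    (le_add_of_nonneg_right zero_le_one)
  have hH := mul_norm_resolvent_mulVec_le hWnn (fun i => (hWrs i).le) hσ hσ1 hδ
    (fun i => ⟨hδp i, (hp i).2⟩) x
  calc _ ≤ Real.sqrt n * ‖(σ • (1 - (1 - σ • diagonal p) * W)⁻¹ * diagonal p) *ᵥ x‖ :=
        enorm_le_sqrt_mul_pi_norm _
    _ ≤ Real.sqrt n * (‖x‖ / δ) := by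
        gcongr
        rw [le_div_iff₀ hδ]
        linarith
    _ ≤ Real.sqrt n / δ * _root_.enorm x := by
        rw [mul_div_assoc', div_mul_eq_mul_div]
        gcongr
        exact pi_norm_le_enorm x

theorem stmt9 {n : ℕ} (W : Matrix (Fin n) (Fin n) ℝ) (p : Fin n → ℝ)
    (hWnn : ∀ i j, 0 ≤ W i j) (hWrs : ∀ i, ∑ j, W i j = 1)
    (hWirr : MatIrreducible W) (hp : ∀ i, 0 < p i ∧ p i ≤ 1) :
    ∃ M > (0 : ℝ), ∃ σbar > (0 : ℝ), ∀ σ : ℝ, 0 < σ → σ ≤ σbar →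
      opNorm (σ • (1 - (1 - σ • Matrix.diagonal p) * W)⁻¹ * Matrix.diagonal p)
        ≤ M :=
  stmt9_general W p hWnn hWrs hp
end

section
/- Under the hypotheses of the main theorem, the steady state ȳ(σ) = H(σ)y₀ of the Friedkin–Johnsen model satisfies a quasi-consensus: for any two components i, j there exist M, σ̄ > 0 such that |ȳᵢ(σ) − ȳⱼ(σ)| ≤ M σ for all σ ∈ (0, σ̄]. -/
/-!
The steady state `x = ȳ(σ)` satisfies `x - W x = Σ (y₀ - W x)`, and each `x k` is a convex
combination of `(W x) k` and `y₀ k`, so `‖x‖∞ ≤ ‖y₀‖∞` and hence `‖x - W x‖∞ ≤ 2σ ‖y₀‖∞`.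
By irreducibility the fixed points of `W` are the constant vectors, so the functional
`z ↦ z i - z j` vanishes on the kernel of `1 - W`, factors through it, and, in finite dimension,
is bounded by a multiple of `‖z - W z‖∞`.
-/

open Matrix

open LinearMap

theorem LinearMap.exists_comp_eq_of_ker_le {K V W V' : Type*} [Field K] [AddCommGroup V]
    [Module K V] [AddCommGroup W] [Module K W] [AddCommGroup V'] [Module K V']
    (f : V →ₗ[K] W) (g : V →ₗ[K] V') (h : ker f ≤ ker g) : ∃ ψ : W →ₗ[K] V', ψ ∘ₗ f = g := by
  obtain ⟨ψ, hψ⟩ := ((ker f).liftQ g h ∘ₗ f.quotKerEquivRange.symm.toLinearMap).exists_extend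
  refine ⟨ψ, LinearMap.ext fun x => ?_⟩
  have := LinearMap.congr_fun hψ ⟨f x, mem_range_self f x⟩
  simpa [quotKerEquivRange_symm_apply_image] using this

theorem LinearMap.exists_norm_le_mul_norm_of_ker_le {𝕜 E F G : Type*} [NontriviallyNormedField 𝕜]
    [CompleteSpace 𝕜] [NormedAddCommGroup E] [NormedSpace 𝕜 E] [NormedAddCommGroup F]
    [NormedSpace 𝕜 F] [FiniteDimensional 𝕜 F] [NormedAddCommGroup G] [NormedSpace 𝕜 G]
    (f : E →ₗ[𝕜] F) (g : E →ₗ[𝕜] G) (h : ker f ≤ ker g) :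
    ∃ C > 0, ∀ x, ‖g x‖ ≤ C * ‖f x‖ := by
  obtain ⟨ψ, rfl⟩ := f.exists_comp_eq_of_ker_le g h
  refine ⟨‖ψ.toContinuousLinearMap‖ + 1, by positivity, fun x => ?_⟩
  calc ‖ψ (f x)‖ = ‖ψ.toContinuousLinearMap (f x)‖ := rfl
    _ ≤ ‖ψ.toContinuousLinearMap‖ * ‖f x‖ := ψ.toContinuousLinearMap.le_opNorm _
    _ ≤ (‖ψ.toContinuousLinearMap‖ + 1) * ‖f x‖ := by gcongr; linarith

namespace Matrix

variable {ι : Type*} [Fintype ι] [DecidableEq ι] {P : Matrix ι ι ℝ}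

theorem norm_mulVec_le_of_mem_rowStochastic (hP : P ∈ rowStochastic ℝ ι) (v : ι → ℝ) :
    ‖P *ᵥ v‖ ≤ ‖v‖ := by
  refine (pi_norm_le_iff_of_nonneg (norm_nonneg v)).2 fun k => ?_
  calc ‖(P *ᵥ v) k‖ ≤ ∑ l, ‖P k l * v l‖ := norm_sum_le _ _
    _ ≤ ∑ l, P k l * ‖v‖ := by
        gcongr with l
        rw [norm_mul, Real.norm_of_nonneg (nonneg_of_mem_rowStochastic hP)]
        exact mul_le_mul_of_nonneg_left (norm_le_pi_norm v l) (nonneg_of_mem_rowStochastic hP)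
    _ = ‖v‖ := by rw [← Finset.sum_mul, sum_row_of_mem_rowStochastic hP, one_mul]

theorem apply_eq_of_mulVec_apply_eq_of_le (hP : P ∈ rowStochastic ℝ ι) {z : ι → ℝ} {m c : ι}
    (hm : (P *ᵥ z) m = z m) (hmax : ∀ l, z l ≤ z m) (hc : 0 < P m c) : z c = z m := by
  have hsum : ∑ l, P m l * (z m - z l) = 0 := by
    simp only [mul_sub, Finset.sum_sub_distrib, ← Finset.sum_mul,
      sum_row_of_mem_rowStochastic hP, one_mul]
    exact sub_eq_zero.2 hm.symm
  have hterm := (Finset.sum_eq_zero_iff_of_nonneg fun l _ =>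
    mul_nonneg (nonneg_of_mem_rowStochastic hP) (sub_nonneg.2 (hmax l))).1 hsum c
    (Finset.mem_univ c)
  linarith [(mul_eq_zero.1 hterm).resolve_left hc.ne']

theorem apply_eq_of_mulVec_eq_self (hP : P ∈ rowStochastic ℝ ι)
    (hirr : ∀ i j, ∃ k : ℕ, 0 < (P ^ k) i j) {z : ι → ℝ} (hz : P *ᵥ z = z) (a b : ι) :
    z a = z b := by
  obtain ⟨m, -, hmax⟩ := Finset.exists_max_image Finset.univ z ⟨a, Finset.mem_univ a⟩
  have hzk (k : ℕ) : (P ^ k) *ᵥ z = z := by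
    induction k with
    | zero => exact one_mulVec z
    | succ k ih => rw [pow_succ, ← mulVec_mulVec, hz, ih]
  have hconst (c : ι) : z c = z m := by
    obtain ⟨k, hk⟩ := hirr m c
    exact apply_eq_of_mulVec_apply_eq_of_le (pow_mem hP k) (congrFun (hzk k) m)
      (fun l => hmax l (Finset.mem_univ l)) hk
  rw [hconst a, hconst b]

theorem exists_abs_sub_le_mul_norm_sub_mulVec (hP : P ∈ rowStochastic ℝ ι)
    (hirr : ∀ i j, ∃ k : ℕ, 0 < (P ^ k) i j) (i j : ι) :
    ∃ C > 0, ∀ z : ι → ℝ, |z i - z j| ≤ C * ‖z - P *ᵥ z‖ := by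
  have hker : ker (1 - P).mulVecLin ≤ ker (proj (R := ℝ) (φ := fun _ : ι => ℝ) i - proj j) := by
    intro z hz
    have hfix : P *ᵥ z = z := by
      simpa [sub_mulVec, sub_eq_zero, eq_comm] using hz
    simp [apply_eq_of_mulVec_eq_self hP hirr hfix i j]
  obtain ⟨C, hC, hbound⟩ := exists_norm_le_mul_norm_of_ker_le _ _ hker
  exact ⟨C, hC, fun z => by simpa [sub_mulVec] using hbound z⟩

section FriedkinJohnsen

variable {c : ι → ℝ}

theorem one_sub_one_sub_diagonal_mul_mulVec_apply (x : ι → ℝ) (k : ι) :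
    ((1 - (1 - diagonal c) * P) *ᵥ x) k = x k - (1 - c k) * (P *ᵥ x) k := by
  simp [sub_mulVec, ← mulVec_mulVec, mulVec_diagonal, sub_mul]

theorem norm_le_of_one_sub_one_sub_diagonal_mul_mulVec_eq (hP : P ∈ rowStochastic ℝ ι)
    (hc : ∀ k, 0 < c k ∧ c k ≤ 1) {x y : ι → ℝ}
    (hx : (1 - (1 - diagonal c) * P) *ᵥ x = diagonal c *ᵥ y) : ‖x‖ ≤ ‖y‖ := by
  by_contra! hlt
  have hx0 : 0 < ‖x‖ := (norm_nonneg y).trans_lt hlt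
  refine lt_irrefl ‖x‖ ((pi_norm_lt_iff hx0).2 fun k => ?_)
  have hk : x k = (1 - c k) * (P *ᵥ x) k + c k * y k := by
    have := congrFun hx k
    rw [one_sub_one_sub_diagonal_mul_mulVec_apply, mulVec_diagonal] at this
    linarith
  obtain ⟨hck, hck1⟩ := hc k
  calc ‖x k‖ ≤ (1 - c k) * ‖(P *ᵥ x) k‖ + c k * ‖y k‖ := by
        rw [hk]
        refine (norm_add_le _ _).trans ?_
        rw [norm_mul, norm_mul, Real.norm_of_nonneg (sub_nonneg.2 hck1),
          Real.norm_of_nonneg hck.le]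
    _ ≤ (1 - c k) * ‖x‖ + c k * ‖y‖ := by
        have hPx := (norm_le_pi_norm _ k).trans (norm_mulVec_le_of_mem_rowStochastic hP x)
        have hy := norm_le_pi_norm y k
        gcongr
    _ < ‖x‖ := by nlinarith

theorem isUnit_det_one_sub_one_sub_diagonal_mul (hP : P ∈ rowStochastic ℝ ι)
    (hc : ∀ k, 0 < c k ∧ c k ≤ 1) : IsUnit (1 - (1 - diagonal c) * P).det := by
  refine isUnit_iff_ne_zero.2 fun hdet => ?_
  obtain ⟨v, hv0, hv⟩ := exists_mulVec_eq_zero_iff.2 hdet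
  have hv' := norm_le_of_one_sub_one_sub_diagonal_mul_mulVec_eq hP hc (y := 0)
    (by rw [hv, mulVec_zero])
  exact hv0 (norm_le_zero_iff.1 (by simpa using hv'))

theorem norm_sub_mulVec_le_of_one_sub_one_sub_diagonal_mul_mulVec_eq
    (hP : P ∈ rowStochastic ℝ ι) (hc : ∀ k, 0 < c k ∧ c k ≤ 1) {s : ℝ} (hcs : ∀ k, c k ≤ s)
    {x y : ι → ℝ} (hx : (1 - (1 - diagonal c) * P) *ᵥ x = diagonal c *ᵥ y) :
    ‖x - P *ᵥ x‖ ≤ 2 * s * ‖y‖ := by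
  have hxy := norm_le_of_one_sub_one_sub_diagonal_mul_mulVec_eq hP hc hx
  have hsy : 0 ≤ s * ‖y‖ := by
    rcases isEmpty_or_nonempty ι with hι | ⟨⟨k⟩⟩
    · simp [Subsingleton.elim y 0]
    · exact mul_nonneg ((hc k).1.le.trans (hcs k)) (norm_nonneg y)
  refine (pi_norm_le_iff_of_nonneg (by linarith)).2 fun k => ?_
  have hk : x k - (P *ᵥ x) k = c k * (y k - (P *ᵥ x) k) := by
    have := congrFun hx k
    rw [one_sub_one_sub_diagonal_mul_mulVec_apply, mulVec_diagonal] at this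
    linarith
  obtain ⟨hck, -⟩ := hc k
  calc ‖(x - P *ᵥ x) k‖ = c k * ‖y k - (P *ᵥ x) k‖ := by
        rw [Pi.sub_apply, hk, norm_mul, Real.norm_of_nonneg hck.le]
    _ ≤ c k * (‖y‖ + ‖y‖) := by
        have hPx := (norm_le_pi_norm _ k).trans
          ((norm_mulVec_le_of_mem_rowStochastic hP x).trans hxy)
        gcongr
        exact (norm_sub_le _ _).trans (add_le_add (norm_le_pi_norm y k) hPx)
    _ ≤ s * (‖y‖ + ‖y‖) := mul_le_mul_of_nonneg_right (hcs k) (by positivity)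
    _ = 2 * s * ‖y‖ := by ring

end FriedkinJohnsen

end Matrix

theorem stmt11 {n : ℕ} (W : Matrix (Fin n) (Fin n) ℝ) (p : Fin n → ℝ)
    (y₀ : Fin n → ℝ)
    (hWnn : ∀ i j, 0 ≤ W i j) (hWrs : ∀ i, ∑ j, W i j = 1)
    (hWirr : MatIrreducible W) (hp : ∀ i, 0 < p i ∧ p i ≤ 1) :
    ∀ i j : Fin n, ∃ M > (0 : ℝ), ∃ σbar > (0 : ℝ), ∀ σ : ℝ, 0 < σ → σ ≤ σbar →
      |((σ • (1 - (1 - σ • Matrix.diagonal p) * W)⁻¹ * Matrix.diagonal p) *ᵥ y₀) i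
        - ((σ • (1 - (1 - σ • Matrix.diagonal p) * W)⁻¹ * Matrix.diagonal p) *ᵥ y₀) j|
        ≤ M * σ := by
  intro i j
  have hW : W ∈ rowStochastic ℝ (Fin n) := mem_rowStochastic_iff_sum.2 ⟨hWnn, hWrs⟩
  obtain ⟨C, hC, hosc⟩ := exists_abs_sub_le_mul_norm_sub_mulVec hW hWirr i j
  refine ⟨C * (2 * ‖y₀‖ + 1), by positivity, 1, one_pos, fun σ hσ hσ1 => ?_⟩
  have hcσ (k : Fin n) : (σ • p) k ≤ σ := by
    simpa using mul_le_of_le_one_right hσ.le (hp k).2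
  have hc (k : Fin n) : 0 < (σ • p) k ∧ (σ • p) k ≤ 1 :=
    ⟨mul_pos hσ (hp k).1, (hcσ k).trans hσ1⟩
  rw [Matrix.smul_mul, ← Matrix.mul_smul, ← diagonal_smul]
  set A := 1 - (1 - diagonal (σ • p)) * W
  set x := (A⁻¹ * diagonal (σ • p)) *ᵥ y₀
  have hx : A *ᵥ x = diagonal (σ • p) *ᵥ y₀ := by
    rw [mulVec_mulVec, ← mul_assoc,
      mul_nonsing_inv _ (isUnit_det_one_sub_one_sub_diagonal_mul hW hc), one_mul]
  calc |x i - x j| ≤ C * ‖x - W *ᵥ x‖ := hosc x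
    _ ≤ C * (2 * σ * ‖y₀‖) := by
        gcongr
        exact norm_sub_mulVec_le_of_one_sub_one_sub_diagonal_mul_mulVec_eq hW hc hcσ hx
    _ ≤ C * (2 * ‖y₀‖ + 1) * σ := by nlinarith [mul_pos hC hσ]
end

section
/- Let W be nonnegative row-stochastic irreducible with left Perron eigenvector αᵀ, αᵀ𝟙 = 1, and T diagonal with positive entries. Then the matrix A = T⁻¹(I−W) + (1/q₂)·𝟙αᵀT, where q₂ = αᵀT²𝟙 > 0, is invertible. -/
open Matrix

lemma pow_entry_nonneg {n : ℕ} (W : Matrix (Fin n) (Fin n) ℝ)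
    (hWnn : ∀ i j, 0 ≤ W i j) : ∀ (k : ℕ) i j, 0 ≤ (W ^ k) i j := by
  intro k
  induction k with
  | zero => intro i j; simp [Matrix.one_apply]; split <;> norm_num
  | succ k ih =>
      intro i j
      rw [pow_succ, Matrix.mul_apply]
      exact Finset.sum_nonneg fun l _ => mul_nonneg (ih i l) (hWnn l j)

lemma eigen_const {n : ℕ} (W : Matrix (Fin n) (Fin n) ℝ)
    (hWnn : ∀ i j, 0 ≤ W i j) (hWrs : ∀ i, ∑ j, W i j = 1)
    (hWirr : MatIrreducible W) [Nonempty (Fin n)] (v : Fin n → ℝ)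
    (hv : W *ᵥ v = v) : ∃ m, ∀ j, v j = m := by
  set m := Finset.univ.sup' Finset.univ_nonempty v with hm
  obtain ⟨i0, -, hi0⟩ := Finset.exists_mem_eq_sup' Finset.univ_nonempty v
  have hle : ∀ j, v j ≤ m := fun j => Finset.le_sup' v (Finset.mem_univ j)
  -- closedness: if v i = m and W i j > 0 then v j = m
  have hclosed : ∀ i, v i = m → ∀ j, 0 < W i j → v j = m := by
    intro i hi j hij
    have hsum : ∑ j, W i j * (m - v j) = 0 := by
      have h1 : (W *ᵥ v) i = v i := by rw [hv]
      rw [Matrix.mulVec, dotProduct] at h1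
      have : ∑ j, W i j * (m - v j) = (∑ j, W i j) * m - ∑ j, W i j * v j := by
        rw [Finset.sum_mul, ← Finset.sum_sub_distrib]
        apply Finset.sum_congr rfl
        intro x _; ring
      rw [this, hWrs, h1, hi]; ring
    have hterm : ∀ j ∈ Finset.univ, W i j * (m - v j) = 0 := by
      rw [← Finset.sum_eq_zero_iff_of_nonneg]
      · exact hsum
      · intro x _; exact mul_nonneg (hWnn i x) (by linarith [hle x])
    have := hterm j (Finset.mem_univ j)
    rcases mul_eq_zero.mp this with h | h
    · exact absurd h hij.ne'
    · linarith
  have hpow : ∀ (k : ℕ) i, v i = m → ∀ j, 0 < (W ^ k) i j → v j = m := by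
    intro k
    induction k with
    | zero =>
        intro i hi j hij
        simp [Matrix.one_apply] at hij
        split at hij
        · next h => exact h ▸ hi
        · norm_num at hij
    | succ k ih =>
        intro i hi j hij
        rw [pow_succ, Matrix.mul_apply] at hij
        have : (0:ℝ) = ∑ l : Fin n, 0 := by simp
        obtain ⟨l, -, hl⟩ := Finset.exists_lt_of_sum_lt (this ▸ hij)
        rcases mul_pos_iff.mp hl with ⟨h1, h2⟩ | ⟨h1, h2⟩
        · exact hclosed l (ih i hi l h1) j h2
        · exact absurd h1 (not_lt.mpr (pow_entry_nonneg W hWnn k i l))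
  refine ⟨m, fun j => ?_⟩
  obtain ⟨k, hk⟩ := hWirr i0 j
  exact hpow k i0 hi0.symm j hk

theorem stmt16 {n : ℕ} (W : Matrix (Fin n) (Fin n) ℝ) (p α : Fin n → ℝ)
    (hWnn : ∀ i j, 0 ≤ W i j) (hWrs : ∀ i, ∑ j, W i j = 1)
    (hWirr : MatIrreducible W)
    (hα : α ᵥ* W = α) (hαnn : ∀ i, 0 ≤ α i) (hαsum : ∑ i, α i = 1)
    (hp : ∀ i, 0 < p i) :
    IsUnit ((Matrix.diagonal p)⁻¹ * (1 - W) +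
      (∑ i, α i * (p i) ^ 2)⁻¹ •
        Matrix.vecMulVec (fun _ => (1 : ℝ)) (fun i => α i * p i)).det := by
  have hn : 0 < n := by
    rcases Nat.eq_zero_or_pos n with h | h
    · subst h; simp at hαsum
    · exact h
  haveI : Nonempty (Fin n) := ⟨⟨0, hn⟩⟩
  -- some α i is positive
  have hαpos : ∃ i, 0 < α i := by
    by_contra h
    push_neg at h
    have : ∀ i, α i = 0 := fun i => le_antisymm (h i) (hαnn i)
    simp [this] at hαsum
  obtain ⟨i1, hi1⟩ := hαpos
  set q1 : ℝ := ∑ i, α i * p i with hq1def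
  set q2 : ℝ := ∑ i, α i * (p i) ^ 2 with hq2def
  have hq1 : 0 < q1 :=
    Finset.sum_pos' (fun i _ => mul_nonneg (hαnn i) (hp i).le)
      ⟨i1, Finset.mem_univ i1, mul_pos hi1 (hp i1)⟩
  have hq2 : 0 < q2 :=
    Finset.sum_pos' (fun i _ => mul_nonneg (hαnn i) (sq_nonneg (p i)))
      ⟨i1, Finset.mem_univ i1, mul_pos hi1 (pow_pos (hp i1) 2)⟩
  -- inverse of diagonal
  have hdiag : (Matrix.diagonal p)⁻¹ = Matrix.diagonal (fun i => (p i)⁻¹) := by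
    apply Matrix.inv_eq_right_inv
    rw [Matrix.diagonal_mul_diagonal]
    convert Matrix.diagonal_one with i
    exact mul_inv_cancel₀ (hp i).ne'
  rw [isUnit_iff_ne_zero]
  intro hdet
  obtain ⟨v, hv0, hAv⟩ := (Matrix.exists_mulVec_eq_zero_iff).mpr hdet
  -- entrywise equation
  set A := (Matrix.diagonal p)⁻¹ * (1 - W) +
      q2⁻¹ • Matrix.vecMulVec (fun _ => (1 : ℝ)) (fun i => α i * p i) with hAdef
  have hAentry : ∀ i j, A i j
      = (p i)⁻¹ * ((if i = j then (1:ℝ) else 0) - W i j) + q2⁻¹ * (α j * p j) := by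
    intro i j
    rw [hAdef, hdiag]
    simp [Matrix.mul_apply, Matrix.diagonal_apply, Matrix.one_apply, ite_mul,
      Finset.sum_ite_eq, Matrix.vecMulVec_apply]
  have hAv' : ∀ i, (p i)⁻¹ * (v i - ∑ j, W i j * v j)
      + q2⁻¹ * (∑ j, α j * p j * v j) = 0 := by
    intro i
    have h0 := congrFun hAv i
    simp only [Matrix.mulVec, dotProduct, Pi.zero_apply] at h0
    rw [← h0]
    have hterm : ∀ j ∈ Finset.univ, A i j * v j
        = (if i = j then (p i)⁻¹ * v i else 0) - (p i)⁻¹ * (W i j * v j)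
          + q2⁻¹ * (α j * p j * v j) := by
      intro j _
      rw [hAentry i j]
      by_cases h : i = j <;> simp [h] <;> ring
    rw [Finset.sum_congr rfl hterm, Finset.sum_add_distrib, Finset.sum_sub_distrib,
      Finset.sum_ite_eq, ← Finset.mul_sum, ← Finset.mul_sum, mul_sub]
    simp
  set S := ∑ j, α j * p j * v j with hSdef
  have hαW : ∀ j, ∑ i, α i * W i j = α j := by
    intro j
    have := congrFun hα j
    simpa [Matrix.vecMul, dotProduct] using this
  have hswap : ∑ i, α i * ∑ j, W i j * v j = ∑ j, α j * v j := by
    simp_rw [Finset.mul_sum]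
    rw [Finset.sum_comm]
    apply Finset.sum_congr rfl
    intro j _
    calc ∑ i, α i * (W i j * v j) = (∑ i, α i * W i j) * v j := by
          rw [Finset.sum_mul]; exact Finset.sum_congr rfl fun x _ => by ring
      _ = α j * v j := by rw [hαW j]
  have hS0 : S = 0 := by
    have h2 : ∑ i, (α i * p i) * ((p i)⁻¹ * (v i - ∑ j, W i j * v j) + q2⁻¹ * S) = 0 :=
      Finset.sum_eq_zero fun i _ => by rw [hAv' i, mul_zero]
    have h3 : ∑ i, (α i * p i) * ((p i)⁻¹ * (v i - ∑ j, W i j * v j) + q2⁻¹ * S)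
        = (∑ i, α i * v i) - (∑ i, α i * ∑ j, W i j * v j) + q1 * (q2⁻¹ * S) := by
      rw [Finset.sum_congr rfl (fun i (_ : i ∈ Finset.univ) =>
        show (α i * p i) * ((p i)⁻¹ * (v i - ∑ j, W i j * v j) + q2⁻¹ * S)
          = (α i * v i - α i * ∑ j, W i j * v j) + (α i * p i) * (q2⁻¹ * S) from by
            have hpi : p i * (p i)⁻¹ = 1 := mul_inv_cancel₀ (hp i).ne'
            calc (α i * p i) * ((p i)⁻¹ * (v i - ∑ j, W i j * v j) + q2⁻¹ * S)
                = α i * (p i * (p i)⁻¹) * (v i - ∑ j, W i j * v j)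
                  + (α i * p i) * (q2⁻¹ * S) := by ring
              _ = (α i * v i - α i * ∑ j, W i j * v j) + (α i * p i) * (q2⁻¹ * S) := by
                  rw [hpi]; ring)]
      rw [Finset.sum_add_distrib, Finset.sum_sub_distrib, ← Finset.sum_mul, hq1def]
    rw [h3, hswap] at h2
    have h4 : q1 * (q2⁻¹ * S) = 0 := by linarith
    rcases mul_eq_zero.mp h4 with h | h
    · exact absurd h hq1.ne'
    · rcases mul_eq_zero.mp h with h' | h'
      · exact absurd h' (inv_ne_zero hq2.ne')
      · exact h'
  have hfix : W *ᵥ v = v := by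
    funext i
    have := hAv' i
    rw [hS0, mul_zero, add_zero, mul_eq_zero] at this
    rcases this with h | h
    · exact absurd h (inv_ne_zero (hp i).ne')
    · simp only [Matrix.mulVec, dotProduct]
      linarith
  obtain ⟨m, hm⟩ := eigen_const W hWnn hWrs hWirr v hfix
  have hm0 : m = 0 := by
    have : S = q1 * m := by
      rw [hSdef, hq1def, Finset.sum_mul]
      exact Finset.sum_congr rfl fun j _ => by rw [hm j]
    rw [hS0] at this
    rcases mul_eq_zero.mp this.symm with h | h
    · exact absurd h hq1.ne'
    · exact h
  exact hv0 (funext fun j => by rw [hm j, hm0]; rfl)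
end
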